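/- arXiv:2212.07297 — 2 statements merged into one kernel-verified Lean document; each statement's English description precedes it below -/
import Mathlib

section
/- Let T be a rooted tree and let (u,v) be a crossing edge with LCA(u,v) = w, and let beta = min(depth(u), depth(v)) - depth(w). Then it is impossible that x ≠ y, (x,y) is a crossing edge with LCA(x,y) = w, and both x and y are covered by the same endpoint u, i.e., both dist(u,x) ≤ beta and dist(u,y) ≤ beta hold. -/
/-- A finite rooted tree, given by a parent function. `depth v` is the number of
edges on the path from the root to `v`. -/
structure RTree (V : Type*) where
  root : V
  parent : V → V
  parent_root : parent root = root
  depth : V → ℕ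
  depth_root : depth root = 0
  depth_parent : ∀ v, v ≠ root → depth v = depth (parent v) + 1
  reaches_root : ∀ v, ∃ k, parent^[k] v = root

namespace RTree

variable {V : Type*}

/-- `a` is an ancestor of `b` (every vertex is an ancestor of itself). -/
def Ancestor (T : RTree V) (a b : V) : Prop := ∃ k, T.parent^[k] b = a

/-- Tree-path distance: graph distance in the undirected tree. -/
noncomputable def dist (T : RTree V) (a b : V) : ℕ :=
  (SimpleGraph.fromRel (fun x y => T.parent x = y ∧ x ≠ y)).dist a b

/-- `w` is the lowest common ancestor of `u` and `v`. -/
def IsLCA (T : RTree V) (w u v : V) : Prop :=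
  T.Ancestor w u ∧ T.Ancestor w v ∧
    ∀ d, T.Ancestor d u → T.Ancestor d v → T.depth d ≤ T.depth w

/-- `(u,v)` is a crossing edge: neither endpoint is an ancestor of the other. -/
def Crossing (T : RTree V) (u v : V) : Prop :=
  ¬ T.Ancestor u v ∧ ¬ T.Ancestor v u

/-- `c` is a child of `w`. -/
def IsChildOf (T : RTree V) (c w : V) : Prop := T.parent c = w ∧ c ≠ w

/-- Edge `(x,y)` is covered by edge `(u,v)` with radius `beta`. -/
def Covers (T : RTree V) (beta : ℕ) (u v x y : V) : Prop :=
  (T.dist u x ≤ beta ∧ T.dist v y ≤ beta) ∨ (T.dist u y ≤ beta ∧ T.dist v x ≤ beta)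

end RTree

namespace RTree

variable {T : RTree V}

/-- the underlying graph -/
abbrev G (T : RTree V) : SimpleGraph V :=
  SimpleGraph.fromRel (fun x y => T.parent x = y ∧ x ≠ y)

lemma depth_parent_le (v : V) : T.depth (T.parent v) ≤ T.depth v := by
  by_cases h : v = T.root
  · subst h; rw [T.parent_root]
  · rw [T.depth_parent v h]; omega

lemma depth_iterate_le (k : ℕ) (v : V) : T.depth (T.parent^[k] v) ≤ T.depth v := by
  induction k with
  | zero => simp
  | succ n ih =>
    rw [Function.iterate_succ_apply']
    exact le_trans (depth_parent_le _) ih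

lemma ancestor_depth_le {a b : V} (h : T.Ancestor a b) : T.depth a ≤ T.depth b := by
  obtain ⟨k, hk⟩ := h; rw [← hk]; exact depth_iterate_le k b

lemma eq_of_ancestor_depth_eq' {a : V} :
    ∀ (k : ℕ) (b : V), T.parent^[k] b = a → T.depth a = T.depth b → a = b := by
  intro k
  induction k with
  | zero => intro b hk _; simpa using hk.symm
  | succ n ih =>
    intro b hk hd
    by_cases hb : b = T.root
    · subst hb
      rw [Function.iterate_succ_apply, T.parent_root] at hk
      exact ih _ hk hd
    · exfalso
      rw [Function.iterate_succ_apply] at hk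
      have h1 : T.depth a ≤ T.depth (T.parent b) := by
        rw [← hk]; exact depth_iterate_le n _
      have := T.depth_parent b hb
      omega

lemma eq_of_ancestor_depth_eq {a b : V} (h : T.Ancestor a b)
    (hd : T.depth a = T.depth b) : a = b := by
  obtain ⟨k, hk⟩ := h
  exact eq_of_ancestor_depth_eq' k b hk hd

lemma ancestor_trans {a b c : V} (h1 : T.Ancestor a b) (h2 : T.Ancestor b c) :
    T.Ancestor a c := by
  obtain ⟨k, hk⟩ := h1; obtain ⟨m, hm⟩ := h2
  exact ⟨k + m, by rw [Function.iterate_add_apply, hm, hk]⟩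

/-- existence of the child of w towards u -/
lemma exists_child [DecidableEq V] {w u : V} (h : T.Ancestor w u) (hne : u ≠ w) :
    ∃ c, T.parent c = w ∧ c ≠ w ∧ T.Ancestor c u := by
  classical
  have hex : ∃ k, T.parent^[k] u = w := h
  let n := Nat.find hex
  have hn : T.parent^[n] u = w := Nat.find_spec hex
  have hn0 : n ≠ 0 := by
    intro h0
    rw [h0] at hn; simp at hn; exact hne hn
  refine ⟨T.parent^[n-1] u, ?_, ?_, ⟨n-1, rfl⟩⟩
  · have h2 : T.parent^[(n-1)+1] u = w := by
      rw [show n - 1 + 1 = n by omega]; exact hn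
    rw [Function.iterate_succ_apply'] at h2
    exact h2
  · exact Nat.find_min hex (by omega)

lemma child_depth {c w : V} (hc : T.parent c = w) (hne : c ≠ w) :
    T.depth c = T.depth w + 1 := by
  have hcr : c ≠ T.root := by
    intro h; subst h; rw [T.parent_root] at hc; exact hne hc
  rw [T.depth_parent c hcr, hc]

lemma walk_depth_le {a b : V} (p : (G T).Walk a b) :
    T.depth a ≤ T.depth b + p.length := by
  induction p with
  | nil => simp
  | @cons a c b h q ih =>
    rw [SimpleGraph.fromRel_adj] at h
    obtain ⟨hne, hr | hr⟩ := h
    · have : T.depth a = T.depth c + 1 := child_depth hr.1 hne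
      simp [SimpleGraph.Walk.length_cons]; omega
    · have : T.depth a ≤ T.depth c := by rw [← hr.1]; exact depth_parent_le _
      simp [SimpleGraph.Walk.length_cons]; omega

lemma ancestor_parent {c a a' : V} (h : T.Ancestor c a) (hp : T.parent a' = a) :
    T.Ancestor c a' := by
  obtain ⟨k, hk⟩ := h
  exact ⟨k + 1, by rw [Function.iterate_succ_apply, hp, hk]⟩

/-- barrier lemma: a walk from inside the subtree of c to outside must pass
through parent c. -/
lemma barrier {c : V} {a b : V} (p : (G T).Walk a b)
    (ha : T.Ancestor c a) (hb : ¬ T.Ancestor c b) :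
    T.parent c ∈ p.support := by
  induction p with
  | nil => exact absurd ha hb
  | @cons a a' b h q ih =>
    by_cases hS : T.Ancestor c a'
    · exact List.mem_cons_of_mem _ (ih hS hb)
    · rw [SimpleGraph.fromRel_adj] at h
      obtain ⟨hne, hr | hr⟩ := h
      · -- parent a = a'
        obtain ⟨k, hk⟩ := ha
        cases k with
        | zero =>
          simp only [Function.iterate_zero, id] at hk
          have hca' : T.parent c = a' := by rw [← hk]; exact hr.1
          rw [SimpleGraph.Walk.support_cons, hca']
          exact List.mem_cons_of_mem _ q.start_mem_support
        | succ j =>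
          exfalso
          apply hS
          exact ⟨j, by rw [← hr.1, ← Function.iterate_succ_apply]; exact hk⟩
      · exact absurd (ancestor_parent ha hr.1) hS

lemma reachable_root_aux : ∀ (n : ℕ) (v : V), T.depth v ≤ n → (G T).Reachable v T.root := by
  intro n
  induction n with
  | zero =>
    intro v hv
    by_cases h : v = T.root
    · subst h; exact SimpleGraph.Reachable.refl _
    · exfalso; have := T.depth_parent v h; omega
  | succ n ih =>
    intro v hv
    by_cases h : v = T.root
    · subst h; exact SimpleGraph.Reachable.refl _
    · have hdp := T.depth_parent v h
      have hne : v ≠ T.parent v := by intro he; rw [← he] at hdp; omega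
      have hadj : (G T).Adj v (T.parent v) := by
        rw [SimpleGraph.fromRel_adj]
        exact ⟨hne, Or.inl ⟨rfl, hne⟩⟩
      exact (hadj.reachable).trans (ih (T.parent v) (by omega))

lemma reachable_root (v : V) : (G T).Reachable v T.root :=
  reachable_root_aux (T.depth v) v le_rfl

end RTree

open RTree in
/-- It is impossible that both endpoints of a crossing edge `(x,y)` with
`LCA(x,y) = w = LCA(u,v)` are covered by the same endpoint `u` of the
crossing edge `(u,v)` within radius `beta = min(depth u, depth v) - depth w`. -/
theorem stmt2 {V : Type*} [Fintype V] [DecidableEq V] (T : RTree V)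
    (u v w x y : V)
    (hcross : T.Crossing u v) (hlca : T.IsLCA w u v)
    (beta : ℕ) (hbeta : beta = min (T.depth u) (T.depth v) - T.depth w) :
    ¬ (x ≠ y ∧ T.Crossing x y ∧ T.IsLCA w x y ∧
        T.dist u x ≤ beta ∧ T.dist u y ≤ beta) := by
  rintro ⟨hxy, hcxy, hlcaxy, hdx, hdy⟩
  -- u ≠ w
  have huw : u ≠ w := by
    rintro rfl; exact hcross.1 hlca.2.1
  have hxw : x ≠ w := by rintro rfl; exact hcxy.1 hlcaxy.2.1
  have hyw : y ≠ w := by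
    rintro rfl; exact hcxy.2 hlcaxy.1
  obtain ⟨cu, hcu, hcune, hcu_anc⟩ := exists_child hlca.1 huw
  obtain ⟨cx, hcx, hcxne, hcx_anc⟩ := exists_child hlcaxy.1 hxw
  obtain ⟨cy, hcy, hcyne, hcy_anc⟩ := exists_child hlcaxy.2.1 hyw
  have hdcu : T.depth cu = T.depth w + 1 := child_depth hcu hcune
  have hdcx : T.depth cx = T.depth w + 1 := child_depth hcx hcxne
  have hdcy : T.depth cy = T.depth w + 1 := child_depth hcy hcyne
  have hcxcy : cx ≠ cy := by
    rintro rfl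
    have := hlcaxy.2.2 cx hcx_anc hcy_anc
    omega
  -- pick z among x, y with child ≠ cu
  have key : ∀ z cz, T.parent cz = w → cz ≠ w → T.Ancestor cz z → cz ≠ cu →
      z ≠ w → T.dist u z ≤ beta → False := by
    intro z cz hczp hczw hcz_anc hczcu hzw hdz
    have hnotanc : ¬ T.Ancestor cu z := by
      intro hanc
      have hdcz : T.depth cz = T.depth w + 1 := child_depth hczp hczw
      -- cu and cz both ancestors of z, same depth
      obtain ⟨i, hi⟩ := hanc
      obtain ⟨j, hj⟩ := hcz_anc
      rcases le_total i j with hij | hij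
      · have : T.Ancestor cz cu := ⟨j - i, by
          rw [← hi, ← Function.iterate_add_apply, show j - i + i = j by omega]
          exact hj⟩
        exact hczcu (eq_of_ancestor_depth_eq this (by omega))
      · have : T.Ancestor cu cz := ⟨i - j, by
          rw [← hj, ← Function.iterate_add_apply, show i - j + j = i by omega]
          exact hi⟩
        exact hczcu (eq_of_ancestor_depth_eq this (by omega)).symm
    -- get shortest walk u → z
    have hreach : (G T).Reachable u z :=
      (reachable_root u).trans (reachable_root z).symm
    obtain ⟨p, hp⟩ := hreach.exists_walk_length_eq_dist
    have hw_mem : w ∈ p.support := by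
      have := barrier p hcu_anc hnotanc
      rwa [hcu] at this
    set p1 := p.takeUntil w hw_mem with hp1
    set p2 := p.dropUntil w hw_mem with hp2
    have hsplit : p1.length + p2.length = p.length := by
      have := congrArg SimpleGraph.Walk.length (p.take_spec hw_mem)
      rwa [SimpleGraph.Walk.length_append] at this
    have h1 : T.depth u ≤ T.depth w + p1.length := walk_depth_le p1
    have h2 : 1 ≤ p2.length := by
      rcases Nat.eq_zero_or_pos p2.length with h0 | h0
      · exact absurd (SimpleGraph.Walk.eq_of_length_eq_zero h0) (Ne.symm hzw)
      · exact h0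
    have hwu : T.depth w ≤ T.depth u := ancestor_depth_le hlca.1
    have hbu : beta ≤ T.depth u - T.depth w := by omega
    have : T.dist u z = p.length := hp.symm
    omega
  rcases eq_or_ne cx cu with h | h
  · -- then cy ≠ cu
    exact key y cy hcy hcyne hcy_anc (h ▸ hcxcy.symm) hyw hdy
  · exact key x cx hcx hcxne hcx_anc h hxw hdx
end

section
/- A single pass of stable sorting by a higher-order key preserves the lexicographic invariant: if a list is sorted lexicographically by the lower k bytes (as a secondary key with stability), then stably sorting it by byte k yields a list sorted lexicographically by the lower k+1 bytes. -/
/-- The `k`-th byte (least significant first) of a natural number. -/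
def byteKey (k n : ℕ) : ℕ := n / 256 ^ k % 256

/-- Stable sort of a list by a natural-number key (merge sort is stable). -/
def stableSortBy (f : ℕ → ℕ) (l : List ℕ) : List ℕ :=
  l.mergeSort (fun a b => decide (f a ≤ f b))

/-! Merge sort by a key `f` is stable: on each class of equal keys it keeps the input order.
Hence it turns a list sorted by a secondary relation `r` into one sorted lexicographically by
`(f, r)`. In base `b`, `x % b ^ (k + 1)` is ordered lexicographically by the `k`-th digit and
then by `x % b ^ k`, which is the radix-sort step. -/

namespace List

variable {α β : Type*} [LinearOrder β] (f : α → β)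

theorem filter_mergeSort_key_eq (c : β) (l : List α) :
    (l.mergeSort (fun a b => decide (f a ≤ f b))).filter (fun x => f x = c) =
      l.filter (fun x => f x = c) := by
  have trans : ∀ a b c : α, decide (f a ≤ f b) → decide (f b ≤ f c) → decide (f a ≤ f c) := by
    simpa using fun _ _ _ => le_trans
  have total : ∀ a b : α, decide (f a ≤ f b) || decide (f b ≤ f a) := by
    simpa using fun a b => le_total (f a) (f b)
  have hpairwise : (l.filter (fun x => f x = c)).Pairwise (fun a b => decide (f a ≤ f b)) :=
    Pairwise.imp_of_mem (fun ha hb _ => by simp_all) (pairwise_of_forall (fun _ _ => trivial))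
  have hsub : l.filter (fun x => f x = c) <+
      (l.mergeSort (fun a b => decide (f a ≤ f b))).filter (fun x => f x = c) := by
    simpa using ((sublist_mergeSort trans total hpairwise (filter_sublist (l := l))).filter
      (fun x => decide (f x = c)))
  exact (hsub.eq_of_length ((mergeSort_perm l _).filter _).length_eq.symm).symm

theorem pair_sublist_of_pair_sublist_mergeSort_key {l : List α} {a b : α} (hab : f a = f b)
    (h : [a, b] <+ l.mergeSort (fun a b => decide (f a ≤ f b))) : [a, b] <+ l := by
  have := h.filter (fun x => f x = f a)
  rw [filter_mergeSort_key_eq] at this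
  simpa [hab] using this.trans (filter_sublist (l := l))

theorem pairwise_mergeSort_key_lex {r : α → α → Prop} {l : List α} (hl : l.Pairwise r) :
    (l.mergeSort (fun a b => decide (f a ≤ f b))).Pairwise
      (fun a b => f a < f b ∨ (f a = f b ∧ r a b)) := by
  have hkey : (l.mergeSort (fun a b => decide (f a ≤ f b))).Pairwise (fun a b => f a ≤ f b) := by
    simpa using pairwise_mergeSort (l := l) (le := fun a b => decide (f a ≤ f b))
      (by simpa using fun _ _ _ => le_trans) (by simpa using fun a b => le_total (f a) (f b))
  rw [pairwise_iff_forall_sublist] at hkey hl ⊢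
  intro a b hab
  rcases (hkey hab).lt_or_eq with hlt | heq
  · exact Or.inl hlt
  · exact Or.inr ⟨heq, hl (pair_sublist_of_pair_sublist_mergeSort_key f heq hab)⟩

end List

theorem Nat.mod_pow_succ_le_of_lex {b k x y : ℕ} (hb : 0 < b)
    (h : x / b ^ k % b < y / b ^ k % b ∨
      (x / b ^ k % b = y / b ^ k % b ∧ x % b ^ k ≤ y % b ^ k)) :
    x % b ^ (k + 1) ≤ y % b ^ (k + 1) := by
  rw [Nat.mod_pow_succ, Nat.mod_pow_succ]
  rcases h with hlt | ⟨heq, hle⟩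
  · calc x % b ^ k + b ^ k * (x / b ^ k % b)
        ≤ b ^ k * (x / b ^ k % b + 1) := by
          rw [mul_add_one, add_comm]
          exact Nat.add_le_add_left (Nat.mod_lt x (pow_pos hb k)).le _
      _ ≤ b ^ k * (y / b ^ k % b) := Nat.mul_le_mul_left _ hlt
      _ ≤ y % b ^ k + b ^ k * (y / b ^ k % b) := Nat.le_add_left _ _
  · rw [heq]
    exact Nat.add_le_add_right hle _

theorem stmt10_general (k : ℕ) (l : List ℕ)
    (hsorted : l.Pairwise (fun a b => a % 256 ^ k ≤ b % 256 ^ k)) :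
    (stableSortBy (byteKey k) l).Pairwise
      (fun a b => a % 256 ^ (k + 1) ≤ b % 256 ^ (k + 1)) :=
  (List.pairwise_mergeSort_key_lex (byteKey k) hsorted).imp
    (Nat.mod_pow_succ_le_of_lex (by norm_num))

/-- One radix-sort pass preserves the lexicographic invariant: if a list of
naturals `< 2^64` is sorted by the lower `k` bytes (i.e. by `n % 256^k`), then
stably sorting it by byte `k` yields a list sorted by the lower `k+1` bytes
(i.e. by `n % 256^(k+1)`). -/
theorem stmt10 (k : ℕ) (l : List ℕ) (hl : ∀ n ∈ l, n < 2 ^ 64)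
    (hsorted : l.Pairwise (fun a b => a % 256 ^ k ≤ b % 256 ^ k)) :
    (stableSortBy (byteKey k) l).Pairwise
      (fun a b => a % 256 ^ (k + 1) ≤ b % 256 ^ (k + 1)) :=
  stmt10_general k l hsorted
end
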